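/- arXiv:1206.0566 — 4 statements merged into one kernel-verified Lean document; each statement's English description precedes it below -/
import Mathlib

section
/- For fixed u ∈ (−π, π] and v ∈ [−π/2, π/2], the curve γ(τ) = (x(τ), y(τ), z(τ)) with x(τ) = e^{τ sin v} cos(τ cos v), y(τ) = e^{τ sin v} sin(τ cos v) cos u, z(τ) = e^{τ sin v} sin(τ cos v) sin u is parametrized by arc length with respect to the metric ds² = (dx² + dy² + dz²)/(x² + y² + z²); that is, (x'(τ)² + y'(τ)² + z'(τ)²)/(x(τ)² + y(τ)² + z(τ)²) = 1 for all τ. -/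
/-!
Write the curve as `γ(τ) = e^{τ sin v} ω(τ cos v)`, where `ω(θ) = (cos θ, sin θ cos u, sin θ sin u)`
is a unit-speed great circle. The rotation by `u` about the `x`-axis preserves lengths, so it
suffices to treat the planar logarithmic spiral `(p, q) = e^{τ a} (cos τb, sin τb)` with
`a = sin v`, `b = cos v`. Its velocity is `(a p - b q, a q + b p)`, the position rotated and scaled
by `a + b i`, so its speed is `√(a² + b²) = 1` times its distance from the origin.
-/

open Real

lemma hasDerivAt_exp_mul_mul_cos_mul (a b τ : ℝ) :
    HasDerivAt (fun t => exp (t * a) * cos (t * b))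
      (a * (exp (τ * a) * cos (τ * b)) - b * (exp (τ * a) * sin (τ * b))) τ :=
  ((hasDerivAt_mul_const a).exp.mul (hasDerivAt_mul_const b).cos).congr_deriv (by ring)

lemma hasDerivAt_exp_mul_mul_sin_mul (a b τ : ℝ) :
    HasDerivAt (fun t => exp (t * a) * sin (t * b))
      (a * (exp (τ * a) * sin (τ * b)) + b * (exp (τ * a) * cos (τ * b))) τ :=
  ((hasDerivAt_mul_const a).exp.mul (hasDerivAt_mul_const b).sin).congr_deriv (by ring)

lemma sq_add_mul_cos_sq_add_mul_sin_sq (p q u : ℝ) :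
    p ^ 2 + (q * cos u) ^ 2 + (q * sin u) ^ 2 = p ^ 2 + q ^ 2 := by
  linear_combination q ^ 2 * cos_sq_add_sin_sq u

lemma rotate_sq_add_sq (a b p q : ℝ) :
    (a * p - b * q) ^ 2 + (a * q + b * p) ^ 2 = (a ^ 2 + b ^ 2) * (p ^ 2 + q ^ 2) := by
  ring

lemma exp_mul_cos_sq_add_exp_mul_sin_sq (s θ : ℝ) :
    (exp s * cos θ) ^ 2 + (exp s * sin θ) ^ 2 = exp s ^ 2 := by
  linear_combination exp s ^ 2 * cos_sq_add_sin_sq θ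

theorem stmt4_general (u v : ℝ) (τ : ℝ) :
    let x : ℝ → ℝ := fun τ => exp (τ * sin v) * cos (τ * cos v)
    let y : ℝ → ℝ := fun τ => exp (τ * sin v) * sin (τ * cos v) * cos u
    let z : ℝ → ℝ := fun τ => exp (τ * sin v) * sin (τ * cos v) * sin u
    ((deriv x τ) ^ 2 + (deriv y τ) ^ 2 + (deriv z τ) ^ 2) /
        ((x τ) ^ 2 + (y τ) ^ 2 + (z τ) ^ 2) = 1 := by
  intro x y z
  have hx : HasDerivAt x _ τ := hasDerivAt_exp_mul_mul_cos_mul (sin v) (cos v) τ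
  have hq := hasDerivAt_exp_mul_mul_sin_mul (sin v) (cos v) τ
  have hy : HasDerivAt y _ τ := hq.mul_const (cos u)
  have hz : HasDerivAt z _ τ := hq.mul_const (sin u)
  rw [hx.deriv, hy.deriv, hz.deriv]
  simp only [x, y, z]
  rw [sq_add_mul_cos_sq_add_mul_sin_sq, sq_add_mul_cos_sq_add_mul_sin_sq, rotate_sq_add_sq,
    sin_sq_add_cos_sq, one_mul, exp_mul_cos_sq_add_exp_mul_sin_sq]
  exact div_self (by positivity)

theorem stmt4 (u v : ℝ) (hu : u ∈ Set.Ioc (-π) π)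
    (hv : v ∈ Set.Icc (-(π/2)) (π/2)) (τ : ℝ) :
    let x : ℝ → ℝ := fun τ => exp (τ * sin v) * cos (τ * cos v)
    let y : ℝ → ℝ := fun τ => exp (τ * sin v) * sin (τ * cos v) * cos u
    let z : ℝ → ℝ := fun τ => exp (τ * sin v) * sin (τ * cos v) * sin u
    ((deriv x τ) ^ 2 + (deriv y τ) ^ 2 + (deriv z τ) ^ 2) /
        ((x τ) ^ 2 + (y τ) ^ 2 + (z τ) ^ 2) = 1 :=
  stmt4_general u v τ
end

section
/- For the map (τ, v, u) ↦ (x, y, z) given by x = e^{τ sin v} cos(τ cos v), y = e^{τ sin v} sin(τ cos v) cos u, z = e^{τ sin v} sin(τ cos v) sin u, after dividing by the model density (x² + y² + z²)^{3/2} = e^{3τ sin v}, the volume element equals |τ · sin(τ cos v)| dτ dv du. -/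
/-!
STATEMENT 5: For the geodesic polar coordinate map
x = e^{τ sin v} cos(τ cos v), y = e^{τ sin v} sin(τ cos v) cos u,
z = e^{τ sin v} sin(τ cos v) sin u, the absolute value of the Jacobian
determinant divided by the model density (x² + y² + z²)^{3/2} = e^{3τ sin v}
equals |τ · sin(τ cos v)|; i.e. the volume element is |τ sin(τ cos v)| dτ dv du.
-/

noncomputable section
open Real

def Px (τ v u : ℝ) : ℝ := exp (τ * sin v) * cos (τ * cos v)
def Py (τ v u : ℝ) : ℝ := exp (τ * sin v) * sin (τ * cos v) * cos u
def Pz (τ v u : ℝ) : ℝ := exp (τ * sin v) * sin (τ * cos v) * sin u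

/-- The Jacobian matrix of (τ, v, u) ↦ (x, y, z). -/
def Jac (τ v u : ℝ) : Matrix (Fin 3) (Fin 3) ℝ :=
  !![deriv (fun s => Px s v u) τ, deriv (fun s => Px τ s u) v, deriv (fun s => Px τ v s) u;
     deriv (fun s => Py s v u) τ, deriv (fun s => Py τ s u) v, deriv (fun s => Py τ v s) u;
     deriv (fun s => Pz s v u) τ, deriv (fun s => Pz τ s u) v, deriv (fun s => Pz τ v s) u]

-- basic building blocks
lemma hEτ (τ v : ℝ) : HasDerivAt (fun s : ℝ => exp (s * sin v)) (exp (τ * sin v) * sin v) τ := by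
  simpa using ((hasDerivAt_id τ).mul_const (sin v)).exp

lemma hCτ (τ v : ℝ) : HasDerivAt (fun s : ℝ => cos (s * cos v)) (-sin (τ * cos v) * cos v) τ := by
  simpa using ((hasDerivAt_id τ).mul_const (cos v)).cos

lemma hSτ (τ v : ℝ) : HasDerivAt (fun s : ℝ => sin (s * cos v)) (cos (τ * cos v) * cos v) τ := by
  simpa using ((hasDerivAt_id τ).mul_const (cos v)).sin

lemma hEv (τ v : ℝ) : HasDerivAt (fun s : ℝ => exp (τ * sin s)) (exp (τ * sin v) * (τ * cos v)) v := by
  simpa using ((Real.hasDerivAt_sin v).const_mul τ).exp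

lemma hCv (τ v : ℝ) :
    HasDerivAt (fun s : ℝ => cos (τ * cos s)) (-sin (τ * cos v) * (τ * -sin v)) v := by
  simpa using ((Real.hasDerivAt_cos v).const_mul τ).cos

lemma hSv (τ v : ℝ) :
    HasDerivAt (fun s : ℝ => sin (τ * cos s)) (cos (τ * cos v) * (τ * -sin v)) v := by
  simpa using ((Real.hasDerivAt_cos v).const_mul τ).sin

-- the six nontrivial derivatives
lemma dPxτ (τ v u : ℝ) : deriv (fun s => Px s v u) τ =
    exp (τ * sin v) * sin v * cos (τ * cos v) +
      exp (τ * sin v) * (-sin (τ * cos v) * cos v) := by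
  have := ((hEτ τ v).mul (hCτ τ v)).deriv
  simpa [Px, Pi.mul_def] using this

lemma dPyτ (τ v u : ℝ) : deriv (fun s => Py s v u) τ =
    (exp (τ * sin v) * sin v * sin (τ * cos v) +
      exp (τ * sin v) * (cos (τ * cos v) * cos v)) * cos u := by
  have := (((hEτ τ v).mul (hSτ τ v)).mul_const (cos u)).deriv
  simpa [Py] using this

lemma dPzτ (τ v u : ℝ) : deriv (fun s => Pz s v u) τ =
    (exp (τ * sin v) * sin v * sin (τ * cos v) +
      exp (τ * sin v) * (cos (τ * cos v) * cos v)) * sin u := by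
  have := (((hEτ τ v).mul (hSτ τ v)).mul_const (sin u)).deriv
  simpa [Pz] using this

lemma dPxv (τ v u : ℝ) : deriv (fun s => Px τ s u) v =
    exp (τ * sin v) * (τ * cos v) * cos (τ * cos v) +
      exp (τ * sin v) * (-sin (τ * cos v) * (τ * -sin v)) := by
  have := ((hEv τ v).mul (hCv τ v)).deriv
  simpa [Px, Pi.mul_def] using this

lemma dPyv (τ v u : ℝ) : deriv (fun s => Py τ s u) v =
    (exp (τ * sin v) * (τ * cos v) * sin (τ * cos v) +
      exp (τ * sin v) * (cos (τ * cos v) * (τ * -sin v))) * cos u := by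
  have := (((hEv τ v).mul (hSv τ v)).mul_const (cos u)).deriv
  simpa [Py] using this

lemma dPzv (τ v u : ℝ) : deriv (fun s => Pz τ s u) v =
    (exp (τ * sin v) * (τ * cos v) * sin (τ * cos v) +
      exp (τ * sin v) * (cos (τ * cos v) * (τ * -sin v))) * sin u := by
  have := (((hEv τ v).mul (hSv τ v)).mul_const (sin u)).deriv
  simpa [Pz] using this

lemma dPxu (τ v u : ℝ) : deriv (fun s => Px τ v s) u = 0 := by
  simp [Px]

lemma dPyu (τ v u : ℝ) : deriv (fun s => Py τ v s) u =
    exp (τ * sin v) * sin (τ * cos v) * (-sin u) := by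
  have := ((Real.hasDerivAt_cos u).const_mul (exp (τ * sin v) * sin (τ * cos v))).deriv
  simpa [Py, mul_comm, mul_assoc] using this

lemma dPzu (τ v u : ℝ) : deriv (fun s => Pz τ v s) u =
    exp (τ * sin v) * sin (τ * cos v) * cos u := by
  have := ((Real.hasDerivAt_sin u).const_mul (exp (τ * sin v) * sin (τ * cos v))).deriv
  simpa [Pz, mul_comm, mul_assoc] using this

lemma det_jac (τ v u : ℝ) :
    (Jac τ v u).det = -(exp (τ * sin v) ^ 3 * (τ * sin (τ * cos v))) := by
  have h1 := sin_sq_add_cos_sq u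
  have h2 := sin_sq_add_cos_sq v
  have h3 := sin_sq_add_cos_sq (τ * cos v)
  rw [Jac, Matrix.det_fin_three]
  rw [dPxτ, dPyτ, dPzτ, dPxv, dPyv, dPzv, dPxu, dPyu, dPzu]
  simp only [Matrix.cons_val_zero, Matrix.cons_val_one, Matrix.head_cons, Matrix.cons_val_two,
    Matrix.tail_cons, Matrix.cons_val', Matrix.empty_val', Matrix.cons_val_fin_one,
    Matrix.head_fin_const, Matrix.of_apply]
  linear_combination
    (-(τ * exp (τ * sin v) ^ 3 * sin (τ * cos v)) *
        (sin (τ * cos v) ^ 2 + cos (τ * cos v) ^ 2) * (sin u ^ 2 + cos u ^ 2)) * h2 +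
    (-(τ * exp (τ * sin v) ^ 3 * sin (τ * cos v)) * (sin u ^ 2 + cos u ^ 2)) * h3 +
    (-(τ * exp (τ * sin v) ^ 3 * sin (τ * cos v))) * h1

theorem stmt5 (τ v u : ℝ) :
    -- the model density in polar coordinates
    ((Px τ v u) ^ 2 + (Py τ v u) ^ 2 + (Pz τ v u) ^ 2) ^ ((3 : ℝ) / 2) =
      exp (3 * (τ * sin v)) ∧
    -- the volume element: |det J| / (x²+y²+z²)^{3/2} = |τ · sin(τ cos v)|
    |(Jac τ v u).det| / ((Px τ v u) ^ 2 + (Py τ v u) ^ 2 + (Pz τ v u) ^ 2) ^ ((3 : ℝ) / 2) =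
      |τ * sin (τ * cos v)| := by
  have h1 := sin_sq_add_cos_sq u
  have h3 := sin_sq_add_cos_sq (τ * cos v)
  have hsum : (Px τ v u) ^ 2 + (Py τ v u) ^ 2 + (Pz τ v u) ^ 2 = exp (2 * (τ * sin v)) := by
    have he : exp (2 * (τ * sin v)) = exp (τ * sin v) ^ 2 := by
      rw [two_mul, exp_add, sq]
    rw [he, Px, Py, Pz]
    linear_combination (exp (τ * sin v)) ^ 2 * sin (τ * cos v) ^ 2 * h1 +
      (exp (τ * sin v)) ^ 2 * h3
  have hdens : ((Px τ v u) ^ 2 + (Py τ v u) ^ 2 + (Pz τ v u) ^ 2) ^ ((3 : ℝ) / 2) =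
      exp (3 * (τ * sin v)) := by
    rw [hsum, Real.rpow_def_of_pos (exp_pos _), Real.log_exp]
    ring_nf
  refine ⟨hdens, ?_⟩
  rw [hdens, det_jac, abs_neg, abs_mul, abs_pow, abs_exp]
  have hE3 : exp (τ * sin v) ^ 3 = exp (3 * (τ * sin v)) := by
    rw [← Real.exp_nat_mul]; norm_num
  rw [hE3, mul_comm, mul_div_assoc, div_self (exp_pos _).ne', mul_one]

end
end

section
/- The volume of the geodesic ball B(ρ) of radius ρ ∈ [0, π] in S²×ℝ equals Vol(B(ρ)) = 2π ∫₀^ρ ∫_{−π/2}^{π/2} τ · sin(τ cos v) dv dτ (where the integrand τ·sin(τ cos v) is nonnegative on the domain since 0 ≤ τ cos v ≤ π). -/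
/-!
STATEMENT 6: The volume of the geodesic ball B(ρ), ρ ∈ [0, π], in S²×ℝ
(modelled in ℝ³ \ {0} with volume form (x²+y²+z²)^{-3/2} dx dy dz, the ball
being the image of {0 ≤ τ ≤ ρ} × {−π/2 ≤ v ≤ π/2} × {−π < u ≤ π} under the
geodesic polar coordinate map) equals
2π ∫₀^ρ ∫_{−π/2}^{π/2} τ · sin(τ cos v) dv dτ.
-/

noncomputable section
open Real MeasureTheory

/-- Geodesic polar coordinates about (1,0,0). -/
def polarMap (p : ℝ × ℝ × ℝ) : ℝ × ℝ × ℝ :=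
  (exp (p.1 * sin p.2.1) * cos (p.1 * cos p.2.1),
   exp (p.1 * sin p.2.1) * sin (p.1 * cos p.2.1) * cos p.2.2,
   exp (p.1 * sin p.2.1) * sin (p.1 * cos p.2.1) * sin p.2.2)

/-- The geodesic ball of radius ρ centred at (1,0,0), in the model. -/
def geoBall (ρ : ℝ) : Set (ℝ × ℝ × ℝ) :=
  polarMap '' (Set.Icc 0 ρ ×ˢ Set.Icc (-(π/2)) (π/2) ×ˢ Set.Ioc (-π) π)

/-!
Pull the integral back along `polarMap`. The boundary of the parameter box is a null set with
null image, and on the open box `polarMap` is injective when `ρ ≤ π`: the norm `e^{τ sin v}`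
recovers `τ sin v`, the first coordinate then recovers `τ cos v ∈ (0, π)`, hence `(τ, v)`, and
the last two coordinates recover `u`. The Jacobian determinant is `-e^{3τ sin v} τ sin (τ cos v)`
and the density at `polarMap (τ, v, u)` is `e^{-3τ sin v}`, so the pulled-back integrand is
`τ sin (τ cos v)`; it does not depend on `u`, whose range contributes the factor `2π`.
-/

open Set

theorem image_ae_eq_image_of_ae_eq {E : Type*} [NormedAddCommGroup E] [NormedSpace ℝ E]
    [FiniteDimensional ℝ E] [MeasurableSpace E] [BorelSpace E] {μ : Measure E}
    [μ.IsAddHaarMeasure] {f : E → E} {s t : Set E} (hf : DifferentiableOn ℝ f s)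
    (hts : t ⊆ s) (hst : s =ᵐ[μ] t) : f '' s =ᵐ[μ] f '' t := by
  have hnull : μ (f '' (s \ t)) = 0 :=
    addHaar_image_eq_zero_of_differentiableOn_of_addHaar_eq_zero μ (hf.mono sdiff_subset)
      (ae_eq_set.1 hst).1
  rw [← union_sdiff_cancel hts, image_union]
  exact union_ae_eq_left_of_ae_eq_empty (ae_eq_empty.2 hnull)

theorem setIntegral_Ioo_prod_Ioo_prod_Ioo {F : ℝ → ℝ → ℝ}
    (hF : Continuous (Function.uncurry F)) {a b c d e f : ℝ} (hab : a ≤ b) (hcd : c ≤ d)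
    (hef : e ≤ f) :
    ∫ p in Ioo a b ×ˢ Ioo c d ×ˢ Ioo e f, F p.1 p.2.1 =
      (f - e) * ∫ x in a..b, ∫ y in c..d, F x y := by
  have hint : IntegrableOn (fun p : ℝ × ℝ × ℝ => F p.1 p.2.1) (Ioo a b ×ˢ Ioo c d ×ˢ Ioo e f)
      (volume.prod volume) :=
    ((hF.comp (continuous_fst.prodMk continuous_snd.fst)).continuousOn.integrableOn_compact
      (isCompact_Icc.prod (isCompact_Icc.prod isCompact_Icc))).mono_set
      (prod_mono Ioo_subset_Icc_self (prod_mono Ioo_subset_Icc_self Ioo_subset_Icc_self))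
  have hinner (x : ℝ) :
      ∫ q in Ioo c d ×ˢ Ioo e f, F x q.1 = (f - e) * ∫ y in Ioo c d, F x y := by
    simpa [Measure.volume_eq_prod, Real.volume_real_Ioo_of_le hef, mul_comm] using
      setIntegral_prod_mul (μ := volume) (ν := volume) (F x) (fun _ => (1 : ℝ))
        (Ioo c d) (Ioo e f)
  rw [Measure.volume_eq_prod, setIntegral_prod _ hint]
  simp only [hinner, integral_const_mul, intervalIntegral.integral_of_le hab,
    intervalIntegral.integral_of_le hcd, integral_Ioc_eq_integral_Ioo]

theorem mul_cos_mem_Ioo {τ v : ℝ} (hτ : τ ∈ Ioo 0 π) (hv : v ∈ Ioo (-(π / 2)) (π / 2)) :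
    τ * cos v ∈ Ioo 0 π :=
  ⟨mul_pos hτ.1 (cos_pos_of_mem_Ioo hv),
    (mul_le_of_le_one_right hτ.1.le (cos_le_one v)).trans_lt hτ.2⟩

theorem eq_and_eq_of_mul_cos_mul_sin_eq {r θ r' θ' : ℝ} (hr : 0 < r) (hθ : θ ∈ Ioo (-π) π)
    (hr' : 0 < r') (hθ' : θ' ∈ Ioo (-π) π)
    (h : (r * cos θ, r * sin θ) = (r' * cos θ', r' * sin θ')) : r = r' ∧ θ = θ' := by
  simpa using polarCoord.symm.injOn (x₁ := (r, θ)) (x₂ := (r', θ')) ⟨hr, hθ⟩ ⟨hr', hθ'⟩ h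

@[simps]
def equivFinThree : (ℝ × ℝ × ℝ) ≃ₗ[ℝ] (Fin 3 → ℝ) where
  toFun p := ![p.1, p.2.1, p.2.2]
  invFun f := (f 0, f 1, f 2)
  map_add' p q := by funext i; fin_cases i <;> simp
  map_smul' c p := by funext i; fin_cases i <;> simp
  left_inv p := rfl
  right_inv f := by funext i; fin_cases i <;> rfl

def basisFinThree : Module.Basis (Fin 3) ℝ (ℝ × ℝ × ℝ) := .ofEquivFun equivFinThree

theorem Matrix.toLin_basisFinThree_apply (M : Matrix (Fin 3) (Fin 3) ℝ) (x : ℝ × ℝ × ℝ) :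
    Matrix.toLin basisFinThree basisFinThree M x =
      (M 0 0 * x.1 + M 0 1 * x.2.1 + M 0 2 * x.2.2,
       M 1 0 * x.1 + M 1 1 * x.2.1 + M 1 2 * x.2.2,
       M 2 0 * x.1 + M 2 1 * x.2.1 + M 2 2 * x.2.2) := by
  simp [Matrix.toLin_apply, basisFinThree, Module.Basis.ofEquivFun, Matrix.mulVec, dotProduct,
    Fin.sum_univ_three, add_assoc, mul_comm]

-- Needed to see through the defeq `volume = volume.prod volume`.
instance : Measure.IsAddHaarMeasure (volume : Measure (ℝ × ℝ × ℝ)) :=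
  Measure.prod.instIsAddHaarMeasure _ _

def polarBox (ρ : ℝ) : Set (ℝ × ℝ × ℝ) :=
  Ioo 0 ρ ×ˢ Ioo (-(π / 2)) (π / 2) ×ˢ Ioo (-π) π

theorem measurableSet_polarBox (ρ : ℝ) : MeasurableSet (polarBox ρ) :=
  measurableSet_Ioo.prod (measurableSet_Ioo.prod measurableSet_Ioo)

theorem mul_cos_mem_Ioo_of_mem_polarBox {ρ : ℝ} (hρπ : ρ ≤ π) {p : ℝ × ℝ × ℝ}
    (hp : p ∈ polarBox ρ) : p.1 * cos p.2.1 ∈ Ioo 0 π :=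
  mul_cos_mem_Ioo ⟨hp.1.1, hp.1.2.trans_le hρπ⟩ hp.2.1

theorem polarMap_normSq (p : ℝ × ℝ × ℝ) :
    (polarMap p).1 ^ 2 + (polarMap p).2.1 ^ 2 + (polarMap p).2.2 ^ 2 =
      exp (p.1 * sin p.2.1) ^ 2 := by
  simp only [polarMap]
  linear_combination exp (p.1 * sin p.2.1) ^ 2 * sin_sq_add_cos_sq (p.1 * cos p.2.1) +
    exp (p.1 * sin p.2.1) ^ 2 * sin (p.1 * cos p.2.1) ^ 2 * sin_sq_add_cos_sq p.2.2

theorem injOn_polarMap {ρ : ℝ} (hρπ : ρ ≤ π) : InjOn polarMap (polarBox ρ) := by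
  rintro ⟨τ, v, u⟩ hp ⟨τ', v', u'⟩ hp' h
  have hφ := mul_cos_mem_Ioo_of_mem_polarBox hρπ hp
  have hφ' := mul_cos_mem_Ioo_of_mem_polarBox hρπ hp'
  obtain ⟨⟨hτ, -⟩, hv, hu⟩ := hp
  obtain ⟨⟨hτ', -⟩, hv', hu'⟩ := hp'
  have hr : τ * sin v = τ' * sin v' := by
    have hnorm := polarMap_normSq (τ, v, u)
    rw [h, polarMap_normSq] at hnorm
    exact exp_injective ((pow_left_inj₀ (exp_pos _).le (exp_pos _).le two_ne_zero).1 hnorm).symm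
  simp only [polarMap, Prod.mk.injEq, hr] at h
  obtain ⟨h1, h2, h3⟩ := h
  have hφeq : τ * cos v = τ' * cos v' :=
    injOn_cos (Ioo_subset_Icc_self hφ) (Ioo_subset_Icc_self hφ')
      (mul_left_cancel₀ (exp_pos _).ne' h1)
  have hhalf : Ioo (-(π / 2)) (π / 2) ⊆ Ioo (-π) π :=
    Ioo_subset_Ioo (by linarith [pi_pos]) (by linarith [pi_pos])
  obtain ⟨rfl, rfl⟩ := eq_and_eq_of_mul_cos_mul_sin_eq hτ (hhalf hv) hτ' (hhalf hv')
    (by rw [hφeq, hr])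
  have hE : exp (τ * sin v) * sin (τ * cos v) ≠ 0 :=
    (mul_pos (exp_pos _) (sin_pos_of_mem_Ioo hφ)).ne'
  obtain ⟨-, rfl⟩ := eq_and_eq_of_mul_cos_mul_sin_eq one_pos hu one_pos hu'
    (by rw [mul_left_cancel₀ hE h2, mul_left_cancel₀ hE h3])
  rfl

def polarMapJacobian (p : ℝ × ℝ × ℝ) : Matrix (Fin 3) (Fin 3) ℝ :=
  let τ := p.1; let v := p.2.1; let u := p.2.2
  let E := exp (τ * sin v); let φ := τ * cos v
  !![E * (sin v * cos φ - cos v * sin φ),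
       E * τ * (cos v * cos φ + sin v * sin φ),
       0;
     E * (sin v * sin φ + cos v * cos φ) * cos u,
       E * τ * (cos v * sin φ - sin v * cos φ) * cos u,
       -(E * sin φ * sin u);
     E * (sin v * sin φ + cos v * cos φ) * sin u,
       E * τ * (cos v * sin φ - sin v * cos φ) * sin u,
       E * sin φ * cos u]

def polarMapFDeriv (p : ℝ × ℝ × ℝ) : (ℝ × ℝ × ℝ) →L[ℝ] (ℝ × ℝ × ℝ) :=
  (Matrix.toLin basisFinThree basisFinThree (polarMapJacobian p)).toContinuousLinearMap

theorem det_polarMapFDeriv (p : ℝ × ℝ × ℝ) :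
    (polarMapFDeriv p).det = -exp (p.1 * sin p.2.1) ^ 3 * p.1 * sin (p.1 * cos p.2.1) := by
  obtain ⟨τ, v, u⟩ := p
  simp only [polarMapFDeriv, polarMapJacobian, LinearMap.det_toContinuousLinearMap,
    LinearMap.det_toLin, Matrix.det_fin_three, Matrix.of_apply, Matrix.cons_val',
    Matrix.cons_val_zero, Matrix.cons_val_one, Matrix.cons_val_two, Matrix.head_cons,
    Matrix.tail_cons, Matrix.empty_val', Matrix.cons_val_fin_one, Matrix.head_fin_const]
  set D := -exp (τ * sin v) ^ 3 * τ * sin (τ * cos v)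
  linear_combination D * (sin v ^ 2 + cos v ^ 2) * sin_sq_add_cos_sq u +
    D * sin_sq_add_cos_sq v +
    D * (sin u ^ 2 + cos u ^ 2) * (sin v ^ 2 + cos v ^ 2) * sin_sq_add_cos_sq (τ * cos v)

theorem hasFDerivAt_polarMap (p : ℝ × ℝ × ℝ) : HasFDerivAt polarMap (polarMapFDeriv p) p := by
  have hτ : HasFDerivAt (fun q : ℝ × ℝ × ℝ => q.1) (ContinuousLinearMap.fst ℝ ℝ (ℝ × ℝ)) p :=
    hasFDerivAt_fst
  have hv : HasFDerivAt (fun q : ℝ × ℝ × ℝ => q.2.1)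
      ((ContinuousLinearMap.fst ℝ ℝ ℝ).comp (ContinuousLinearMap.snd ℝ ℝ (ℝ × ℝ))) p :=
    hasFDerivAt_fst.comp p hasFDerivAt_snd
  have hu : HasFDerivAt (fun q : ℝ × ℝ × ℝ => q.2.2)
      ((ContinuousLinearMap.snd ℝ ℝ ℝ).comp (ContinuousLinearMap.snd ℝ ℝ (ℝ × ℝ))) p :=
    hasFDerivAt_snd.comp p hasFDerivAt_snd
  have hE := (hτ.mul hv.sin).exp
  have hS := (hτ.mul hv.cos).sin
  refine ((hE.mul (hτ.mul hv.cos).cos).prodMk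
    (((hE.mul hS).mul hu.cos).prodMk ((hE.mul hS).mul hu.sin))).congr_fderiv ?_
  refine ContinuousLinearMap.ext fun x => ?_
  obtain ⟨τ, v, u⟩ := p
  simp only [polarMapFDeriv, polarMapJacobian, LinearMap.coe_toContinuousLinearMap',
    Matrix.toLin_basisFinThree_apply]
  refine Prod.ext ?_ (Prod.ext ?_ ?_) <;> simp <;> ring

theorem abs_det_polarMapFDeriv_smul_density {ρ : ℝ} (hρπ : ρ ≤ π) {p : ℝ × ℝ × ℝ}
    (hp : p ∈ polarBox ρ) :
    |(polarMapFDeriv p).det| •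
        ((polarMap p).1 ^ 2 + (polarMap p).2.1 ^ 2 + (polarMap p).2.2 ^ 2) ^ (-(3 : ℝ) / 2) =
      p.1 * sin (p.1 * cos p.2.1) := by
  have hsin := sin_pos_of_mem_Ioo (mul_cos_mem_Ioo_of_mem_polarBox hρπ hp)
  have hE := exp_pos (p.1 * sin p.2.1)
  have hdet :
      |(polarMapFDeriv p).det| = exp (p.1 * sin p.2.1) ^ 3 * (p.1 * sin (p.1 * cos p.2.1)) := by
    rw [det_polarMapFDeriv, neg_mul, neg_mul, abs_neg, mul_assoc]
    exact abs_of_pos (mul_pos (pow_pos hE 3) (mul_pos hp.1.1 hsin))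
  have hdensity :
      ((polarMap p).1 ^ 2 + (polarMap p).2.1 ^ 2 + (polarMap p).2.2 ^ 2) ^ (-(3 : ℝ) / 2) =
        (exp (p.1 * sin p.2.1) ^ 3)⁻¹ := by
    rw [polarMap_normSq, ← rpow_natCast, ← rpow_mul hE.le, ← rpow_natCast, ← rpow_neg hE.le]
    norm_num
  rw [hdet, hdensity, smul_eq_mul, mul_right_comm, mul_inv_cancel₀ (pow_pos hE 3).ne', one_mul]

theorem geoBall_ae_eq_image_polarBox (ρ : ℝ) :
    geoBall ρ =ᵐ[volume] polarMap '' polarBox ρ := by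
  have hbox : Icc 0 ρ ×ˢ Icc (-(π / 2)) (π / 2) ×ˢ Ioc (-π) π =ᵐ[volume] polarBox ρ := by
    rw [Measure.volume_eq_prod, Measure.volume_eq_prod]
    exact (Measure.set_prod_ae_eq Ioo_ae_eq_Icc
      (Measure.set_prod_ae_eq Ioo_ae_eq_Icc Ioo_ae_eq_Ioc)).symm
  exact image_ae_eq_image_of_ae_eq
    (fun p _ => (hasFDerivAt_polarMap p).differentiableAt.differentiableWithinAt)
    (prod_mono Ioo_subset_Icc_self (prod_mono Ioo_subset_Icc_self Ioo_subset_Ioc_self)) hbox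

theorem stmt6 (ρ : ℝ) (hρ0 : 0 ≤ ρ) (hρπ : ρ ≤ π) :
    (∫ p in geoBall ρ, (p.1 ^ 2 + p.2.1 ^ 2 + p.2.2 ^ 2) ^ (-(3 : ℝ) / 2)) =
      2 * π * ∫ τ in (0 : ℝ)..ρ, ∫ v in (-(π/2))..(π/2), τ * sin (τ * cos v) := by
  calc
    _ = ∫ p in polarMap '' polarBox ρ, (p.1 ^ 2 + p.2.1 ^ 2 + p.2.2 ^ 2) ^ (-(3 : ℝ) / 2) :=
      setIntegral_congr_set (geoBall_ae_eq_image_polarBox ρ)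
    _ = ∫ p in polarBox ρ, |(polarMapFDeriv p).det| •
          ((polarMap p).1 ^ 2 + (polarMap p).2.1 ^ 2 + (polarMap p).2.2 ^ 2) ^ (-(3 : ℝ) / 2) :=
      integral_image_eq_integral_abs_det_fderiv_smul volume (measurableSet_polarBox ρ)
        (fun p _ => (hasFDerivAt_polarMap p).hasFDerivWithinAt) (injOn_polarMap hρπ) _
    _ = ∫ p in polarBox ρ, p.1 * sin (p.1 * cos p.2.1) :=
      setIntegral_congr_fun (measurableSet_polarBox ρ) fun p hp =>
        abs_det_polarMapFDeriv_smul_density hρπ hp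
    _ = _ := by
      rw [polarBox, setIntegral_Ioo_prod_Ioo_prod_Ioo (F := fun τ v => τ * sin (τ * cos v))
        (by fun_prop) hρ0 (by linarith [pi_pos]) (by linarith [pi_pos])]
      ring
end
end

section
/- If ρ ≥ π, then there exists v ∈ [−π/2, π/2] and τ ∈ (0, ρ] with τ cos v = π, so that the geodesic sphere parametrization y(τ, v, u) = e^{τ sin v} sin(τ cos v) cos u and z(τ, v, u) = e^{τ sin v} sin(τ cos v) sin u satisfies y = z = 0 at a point with τ > 0; hence the geodesic sphere of radius ρ ≥ π is not an embedded (self-intersection-free) surface. Conversely, for ρ ∈ (0, π) the map (v, u) ↦ (x(ρ,v), y(ρ,v,u), z(ρ,v,u)) restricted to v ∈ (−π/2, π/2), u ∈ (−π, π] is injective. -/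
/-!
With `r = exp (ρ sin v)` and `θ = ρ cos v`, the parametrization is the spherical-coordinate map
`(r, θ, u) ↦ (r cos θ, r sin θ cos u, r sin θ sin u)`. At `v = 0`, `τ = π` the polar angle is `π`,
so the whole circle `u ↦ (y, z)` collapses to a point. For `0 < ρ < π` the polar angle stays in
`(0, π)`, where spherical coordinates are injective (two applications of injectivity of polar
coordinates), and `v` is recovered from `r` since `sin` is injective on `[-π/2, π/2]`.
-/

noncomputable section
open Real

/-- Parametrization of the geodesic sphere of radius ρ:
(v, u) ↦ (x, y, z). -/
def sphereMap (ρ : ℝ) (p : ℝ × ℝ) : ℝ × ℝ × ℝ :=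
  (exp (ρ * sin p.1) * cos (ρ * cos p.1),
   exp (ρ * sin p.1) * sin (ρ * cos p.1) * cos p.2,
   exp (ρ * sin p.1) * sin (ρ * cos p.1) * sin p.2)

open Set

theorem polar_injOn :
    InjOn (fun p : ℝ × ℝ => (p.1 * cos p.2, p.1 * sin p.2)) (Ioi 0 ×ˢ Ioc (-π) π) := by
  rintro ⟨r₁, θ₁⟩ ⟨hr₁ : 0 < r₁, hθ₁⟩ ⟨r₂, θ₂⟩ ⟨hr₂ : 0 < r₂, hθ₂⟩ h
  simp only [Prod.mk.injEq] at h
  have hz : (r₁ * (Complex.cos θ₁ + Complex.sin θ₁ * Complex.I) : ℂ)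
      = r₂ * (Complex.cos θ₂ + Complex.sin θ₂ * Complex.I) := by
    apply Complex.ext <;> simp [← Complex.ofReal_cos, ← Complex.ofReal_sin, h.1, h.2]
  have hr : r₁ = r₂ := by
    simpa [Complex.norm_cos_add_sin_mul_I, abs_of_pos hr₁, abs_of_pos hr₂]
      using congrArg norm hz
  have hθ : θ₁ = θ₂ := by
    simpa [Complex.arg_mul_cos_add_sin_mul_I hr₁ hθ₁, Complex.arg_mul_cos_add_sin_mul_I hr₂ hθ₂]
      using congrArg Complex.arg hz
  rw [hr, hθ]

def sphericalToCartesian (p : ℝ × ℝ × ℝ) : ℝ × ℝ × ℝ :=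
  (p.1 * cos p.2.1, p.1 * sin p.2.1 * cos p.2.2, p.1 * sin p.2.1 * sin p.2.2)

theorem sphericalToCartesian_injOn :
    InjOn sphericalToCartesian (Ioi 0 ×ˢ Ioo 0 π ×ˢ Ioc (-π) π) := by
  rintro ⟨r₁, θ₁, u₁⟩ ⟨hr₁, hθ₁, hu₁⟩ ⟨r₂, θ₂, u₂⟩ ⟨hr₂, hθ₂, hu₂⟩ h
  simp only [sphericalToCartesian, Prod.mk.injEq] at h
  obtain ⟨hx, hy, hz⟩ := h
  have hρ₁ : 0 < r₁ * sin θ₁ := mul_pos hr₁ (sin_pos_of_pos_of_lt_pi hθ₁.1 hθ₁.2)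
  have hρ₂ : 0 < r₂ * sin θ₂ := mul_pos hr₂ (sin_pos_of_pos_of_lt_pi hθ₂.1 hθ₂.2)
  have hρu : r₁ * sin θ₁ = r₂ * sin θ₂ ∧ u₁ = u₂ := by
    simpa using polar_injOn (show (r₁ * sin θ₁, u₁) ∈ _ from ⟨hρ₁, hu₁⟩)
      (show (r₂ * sin θ₂, u₂) ∈ _ from ⟨hρ₂, hu₂⟩) (Prod.ext hy hz)
  have hangle : ∀ {θ : ℝ}, θ ∈ Ioo 0 π → θ ∈ Ioc (-π) π := fun hθ =>
    ⟨by linarith [hθ.1, pi_pos], hθ.2.le⟩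
  have hrθ : r₁ = r₂ ∧ θ₁ = θ₂ := by
    simpa using polar_injOn (show (r₁, θ₁) ∈ _ from ⟨hr₁, hangle hθ₁⟩)
      (show (r₂, θ₂) ∈ _ from ⟨hr₂, hangle hθ₂⟩) (Prod.ext hx hρu.1)
  rw [hrθ.1, hrθ.2, hρu.2]

theorem sphereMap_eq_comp (ρ : ℝ) :
    sphereMap ρ = sphericalToCartesian ∘ fun p => (exp (ρ * sin p.1), ρ * cos p.1, p.2) :=
  rfl

theorem sphereMap_injOn {ρ : ℝ} (hρ : ρ ∈ Ioo 0 π) :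
    InjOn (sphereMap ρ) (Ioo (-(π / 2)) (π / 2) ×ˢ Ioc (-π) π) := by
  rw [sphereMap_eq_comp]
  refine sphericalToCartesian_injOn.comp ?_ ?_
  · rintro ⟨v₁, u₁⟩ ⟨hv₁, -⟩ ⟨v₂, u₂⟩ ⟨hv₂, -⟩ h
    simp only [Prod.mk.injEq] at h
    have hsin : sin v₁ = sin v₂ := mul_left_cancel₀ hρ.1.ne' (exp_injective h.1)
    exact Prod.ext (injOn_sin (Ioo_subset_Icc_self hv₁) (Ioo_subset_Icc_self hv₂) hsin) h.2.2
  · rintro ⟨v, u⟩ ⟨hv, hu⟩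
    have hcos : 0 < cos v := cos_pos_of_mem_Ioo hv
    refine ⟨exp_pos _, ⟨mul_pos hρ.1 hcos, ?_⟩, hu⟩
    calc ρ * cos v ≤ ρ * 1 := mul_le_mul_of_nonneg_left (cos_le_one v) hρ.1.le
      _ < π := by linarith [hρ.2]

theorem stmt9 :
    -- self-intersection for ρ ≥ π
    (∀ ρ : ℝ, π ≤ ρ →
      ∃ v ∈ Set.Icc (-(π/2)) (π/2), ∃ τ ∈ Set.Ioc (0 : ℝ) ρ,
        τ * cos v = π ∧
        ∀ u : ℝ, (exp (τ * sin v) * sin (τ * cos v) * cos u = 0 ∧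
                  exp (τ * sin v) * sin (τ * cos v) * sin u = 0)) ∧
    -- injectivity for 0 < ρ < π
    (∀ ρ : ℝ, ρ ∈ Set.Ioo 0 π →
      Set.InjOn (sphereMap ρ) (Set.Ioo (-(π/2)) (π/2) ×ˢ Set.Ioc (-π) π)) := by
  refine ⟨fun ρ hρ => ?_, fun ρ hρ => sphereMap_injOn hρ⟩
  refine ⟨0, ⟨by linarith [pi_pos], by linarith [pi_pos]⟩, π, ⟨pi_pos, hρ⟩, by simp, fun u => ?_⟩
  simp

end
end
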